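/- Let S = {x_0,…,x_d} be a d-dimensional simplex (d+1 affinely independent points in ℝ^n) with squared distances m_{ij} = ‖x_i − x_j‖². Then there exists γ > 0 such that ∑_{0≤i<j≤d} m_{ij} λ_i λ_j ≤ −γ for all (λ_0,…,λ_d) with ∑λ_i = 0 and ∑λ_i² = 1, and moreover for β = γ/(8d²) there exists a d-dimensional simplex S₁ = {y_0,…,y_d} with ‖y_i − y_j‖² = ‖x_i − x_j‖² − β for all i ≠ j. -/

import Mathlib

/-!
For weights `w` with `∑ wᵢ = 0` one has `∑ᵢⱼ ‖xᵢ - xⱼ‖² wᵢ wⱼ = -2 ‖∑ wᵢ xᵢ‖²`, and affine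
independence makes `w ↦ ∑ wᵢ xᵢ` injective on that hyperplane, hence bounded below:
`‖∑ wᵢ xᵢ‖² ≥ γ ∑ wᵢ²`. Subtracting `β < 2γ` from every off-diagonal squared distance changes the
form by `β ∑ wᵢ²` only, so it stays strictly negative on the hyperplane. By Schoenberg's criterion
such a matrix `D` is the squared-distance matrix of a simplex: the polarized matrix
`(D i0 + D j0 - D ij) / 2` is positive definite, hence a Gram matrix of linearly independent
vectors `vᵢ`, and `0, v₁, …, v_d` is the required simplex.
-/

open Finset Matrix

theorem two_mul_sum_filter_lt {α : Type*} [LinearOrder α] [Fintype α] (f : α → α → ℝ)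
    (hsymm : ∀ i j, f i j = f j i) (hdiag : ∀ i, f i i = 0) :
    2 * ∑ p ∈ univ.filter (fun p : α × α => p.1 < p.2), f p.1 p.2 = ∑ i, ∑ j, f i j := by
  have hsplit : ∀ i j, (if i < j then f i j else 0) + (if j < i then f j i else 0) = f i j := by
    intro i j
    rcases lt_trichotomy i j with h | rfl | h
    · simp [h, h.not_gt]
    · simp [hdiag]
    · simp [h, h.not_gt, hsymm i j]
  calc 2 * ∑ p ∈ univ.filter (fun p : α × α => p.1 < p.2), f p.1 p.2
      = ∑ i, ∑ j, (if i < j then f i j else 0) + ∑ i, ∑ j, (if j < i then f j i else 0) := by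
        rw [sum_comm (f := fun i j => if j < i then f j i else 0), sum_filter,
          Fintype.sum_prod_type]
        ring
    _ = ∑ i, ∑ j, f i j := by simp only [← sum_add_distrib, hsplit]

theorem AffineIndependent.exists_pos_mul_sum_sq_le_norm_sq {E : Type*} [NormedAddCommGroup E]
    [NormedSpace ℝ E] {ι : Type*} [Fintype ι] {x : ι → E} (hx : AffineIndependent ℝ x) :
    ∃ γ > 0, ∀ w : ι → ℝ, ∑ i, w i = 0 → γ * ∑ i, w i ^ 2 ≤ ‖∑ i, w i • x i‖ ^ 2 := by
  -- Recording the total weight as well makes the map injective on the whole space.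
  let f : EuclideanSpace ℝ ι →ₗ[ℝ] ℝ × E :=
    Fintype.linearCombination ℝ (fun i => ((1 : ℝ), x i)) ∘ₗ
      (WithLp.linearEquiv 2 ℝ (ι → ℝ)).toLinearMap
  have hf : ∀ w : EuclideanSpace ℝ ι, f w = (∑ i, w i, ∑ i, w i • x i) := by
    simp [f, Fintype.linearCombination_apply, prod_mk_sum]
  obtain ⟨K, hK, hanti⟩ := f.exists_antilipschitzWith <| by
    refine LinearMap.ker_eq_bot'.mpr fun w hw => ?_
    rw [hf, Prod.mk_eq_zero] at hw
    ext i
    exact hx.eq_zero_of_sum_eq_zero hw.1 hw.2 i (mem_univ i)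
  refine ⟨1 / (K : ℝ) ^ 2, by positivity, fun w hw => ?_⟩
  have hle := hanti.le_mul_norm (map_zero f) (WithLp.toLp 2 w)
  simp only [hf, hw, Prod.norm_mk, norm_zero, norm_nonneg, max_eq_right] at hle
  have hsq : ∑ i, w i ^ 2 = ‖WithLp.toLp 2 w‖ ^ 2 := by
    simp [EuclideanSpace.real_norm_sq_eq]
  rw [hsq, div_mul_eq_mul_div, one_mul, div_le_iff₀ (by positivity), ← mul_pow, mul_comm]
  gcongr

theorem sum_sum_dist_sq_mul_mul {E : Type*} [NormedAddCommGroup E] [InnerProductSpace ℝ E]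
    {ι : Type*} [Fintype ι] (x : ι → E) {w : ι → ℝ} (hw : ∑ i, w i = 0) :
    ∑ i, ∑ j, dist (x i) (x j) ^ 2 * w i * w j = -2 * ‖∑ i, w i • x i‖ ^ 2 := by
  have hnorm : ‖∑ i, w i • x i‖ ^ 2 = ∑ i, ∑ j, w i * w j * inner ℝ (x i) (x j) := by
    simp_rw [← real_inner_self_eq_norm_sq, sum_inner, inner_sum, real_inner_smul_left,
      real_inner_smul_right, mul_assoc]
  calc ∑ i, ∑ j, dist (x i) (x j) ^ 2 * w i * w j
      = ∑ i, ∑ j, (‖x i‖ ^ 2 * w i * w j + w i * (‖x j‖ ^ 2 * w j)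
          - 2 * (w i * w j * inner ℝ (x i) (x j))) := by
        refine sum_congr rfl fun i _ => sum_congr rfl fun j _ => ?_
        rw [dist_eq_norm, norm_sub_sq_real]
        ring
    _ = -2 * ‖∑ i, w i • x i‖ ^ 2 := by
        simp only [sum_add_distrib, sum_sub_distrib, ← mul_sum, ← sum_mul, hw, hnorm]
        ring

theorem Matrix.PosSemidef.exists_gram_eq {n : Type*} [Fintype n] [DecidableEq n]
    {G : Matrix n n ℝ} (hG : G.PosSemidef) : ∃ v : n → EuclideanSpace ℝ n, gram ℝ v = G := by
  open scoped MatrixOrder in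
  obtain ⟨B, rfl⟩ := CStarAlgebra.nonneg_iff_eq_star_mul_self.mp hG.nonneg
  refine ⟨fun i => WithLp.toLp 2 (fun k => B k i), ?_⟩
  ext i j
  simp [Matrix.mul_apply, PiLp.inner_apply, Matrix.star_eq_conjTranspose, mul_comm]

theorem affineIndependent_cons_zero_iff {k V : Type*} [Ring k] [AddCommGroup V] [Module k V]
    {n : ℕ} (v : Fin n → V) :
    AffineIndependent k (Fin.cons 0 v : Fin (n + 1) → V) ↔ LinearIndependent k v := by
  rw [affineIndependent_iff_linearIndependent_vsub k _ 0,
    ← linearIndependent_equiv (finSuccAboveEquiv 0)]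
  simp [Function.comp_def, finSuccAboveEquiv_apply]

/-- The Gram matrix of `x₁ - x₀, …, x_k - x₀`, recovered from the squared distances
`D i j = ‖xᵢ - xⱼ‖²` by polarization. -/
noncomputable def sqDistGram {k : ℕ} (D : Fin (k + 1) → Fin (k + 1) → ℝ) :
    Matrix (Fin k) (Fin k) ℝ :=
  of fun i j => (D i.succ 0 + D j.succ 0 - D i.succ j.succ) / 2

section sqDistGram
variable {k : ℕ} {D : Fin (k + 1) → Fin (k + 1) → ℝ}

theorem dotProduct_sqDistGram_mulVec (hsymm : ∀ i j, D i j = D j i) (hdiag : ∀ i, D i i = 0)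
    (c : Fin k → ℝ) :
    c ⬝ᵥ sqDistGram D *ᵥ c = -(1 / 2) * ∑ i, ∑ j, D i j
      * (Fin.cons (-∑ t, c t) c : Fin (k + 1) → ℝ) i
      * (Fin.cons (-∑ t, c t) c : Fin (k + 1) → ℝ) j := by
  set a : Fin k → ℝ := fun i => D i.succ 0
  have hG : c ⬝ᵥ sqDistGram D *ᵥ c
      = (∑ i, a i * c i) * ∑ j, c j - 1 / 2 * ∑ i, ∑ j, D i.succ j.succ * c i * c j := by
    calc c ⬝ᵥ sqDistGram D *ᵥ c
        = (∑ i, ∑ j, a i * c i * c j + ∑ i, ∑ j, a j * c j * c i) / 2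
          - 1 / 2 * ∑ i, ∑ j, D i.succ j.succ * c i * c j := by
          simp only [dotProduct, mulVec, sqDistGram, of_apply, mul_sum, ← sum_add_distrib,
            sum_div, ← sum_sub_distrib]
          exact sum_congr rfl fun i _ => sum_congr rfl fun j _ => by ring
      _ = _ := by
          rw [sum_comm (f := fun i j => a j * c j * c i), sum_mul_sum]
          ring
  have hD : ∑ i, ∑ j, D i j
      * (Fin.cons (-∑ t, c t) c : Fin (k + 1) → ℝ) i
      * (Fin.cons (-∑ t, c t) c : Fin (k + 1) → ℝ) j
      = -2 * (∑ i, a i * c i) * ∑ j, c j + ∑ i, ∑ j, D i.succ j.succ * c i * c j := by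
    simp only [Fin.sum_univ_succ, Fin.cons_zero, Fin.cons_succ, hdiag, zero_mul,
      fun j : Fin k => hsymm 0 j.succ, sum_add_distrib, mul_neg, neg_mul, sum_neg_distrib,
      mul_right_comm _ (∑ t, c t), ← sum_mul, a]
    ring
  rw [hG, hD]
  ring

theorem posDef_sqDistGram (hsymm : ∀ i j, D i j = D j i) (hdiag : ∀ i, D i i = 0)
    (hneg : ∀ w : Fin (k + 1) → ℝ, w ≠ 0 → ∑ i, w i = 0 → ∑ i, ∑ j, D i j * w i * w j < 0) :
    (sqDistGram D).PosDef := by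
  refine .of_dotProduct_mulVec_pos (IsHermitian.ext fun i j => ?_) fun c hc => ?_
  · simp only [sqDistGram, of_apply, star_trivial, hsymm j.succ i.succ]
    ring
  · have hw : (Fin.cons (-∑ t, c t) c : Fin (k + 1) → ℝ) ≠ 0 :=
      fun h => hc (funext fun i => by simpa using congr_fun h i.succ)
    have := hneg _ hw (by simp [Fin.sum_cons])
    rw [star_trivial, dotProduct_sqDistGram_mulVec hsymm hdiag]
    linarith

theorem exists_affineIndependent_dist_sq_eq (hsymm : ∀ i j, D i j = D j i)
    (hdiag : ∀ i, D i i = 0)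
    (hneg : ∀ w : Fin (k + 1) → ℝ, w ≠ 0 → ∑ i, w i = 0 → ∑ i, ∑ j, D i j * w i * w j < 0) :
    ∃ y : Fin (k + 1) → EuclideanSpace ℝ (Fin k),
      AffineIndependent ℝ y ∧ ∀ i j, dist (y i) (y j) ^ 2 = D i j := by
  have hG := posDef_sqDistGram hsymm hdiag hneg
  obtain ⟨v, hv⟩ := hG.posSemidef.exists_gram_eq
  have hinner : ∀ i j, inner ℝ (v i) (v j) = (D i.succ 0 + D j.succ 0 - D i.succ j.succ) / 2 :=
    fun i j => by rw [← gram_apply (𝕜 := ℝ), hv, sqDistGram, of_apply]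
  refine ⟨Fin.cons 0 v, (affineIndependent_cons_zero_iff v).mpr
    (linearIndependent_of_posDef_gram (hv ▸ hG)), fun i j => ?_⟩
  have hnorm : ∀ i, ‖v i‖ ^ 2 = D i.succ 0 := fun i => by
    rw [← real_inner_self_eq_norm_sq, hinner, hdiag]
    ring
  cases i using Fin.cases <;> cases j using Fin.cases
  · simp [hdiag]
  · simp [hnorm, hsymm 0]
  · simp [hnorm]
  · simp only [Fin.cons_succ, dist_eq_norm, norm_sub_sq_real, hnorm, hinner]
    ring

end sqDistGram

theorem exists_affineIndependent_dist_sq_eq_sub {E : Type*} [NormedAddCommGroup E]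
    [InnerProductSpace ℝ E] {k : ℕ} {x : Fin (k + 1) → E} {γ β : ℝ}
    (hγ : ∀ w : Fin (k + 1) → ℝ, ∑ i, w i = 0 → γ * ∑ i, w i ^ 2 ≤ ‖∑ i, w i • x i‖ ^ 2)
    (hβ : β < 2 * γ) :
    ∃ y : Fin (k + 1) → EuclideanSpace ℝ (Fin k), AffineIndependent ℝ y ∧
      ∀ i j, i ≠ j → dist (y i) (y j) ^ 2 = dist (x i) (x j) ^ 2 - β := by
  let D i j := dist (x i) (x j) ^ 2 - if i = j then 0 else β
  have hneg (w : Fin (k + 1) → ℝ) (hw : w ≠ 0) (hsum : ∑ i, w i = 0) :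
      ∑ i, ∑ j, D i j * w i * w j < 0 := by
    have hD : ∑ i, ∑ j, D i j * w i * w j = ∑ i, ∑ j, dist (x i) (x j) ^ 2 * w i * w j
        - β * (∑ i, w i) ^ 2 + β * ∑ i, w i ^ 2 := by
      have hterm : ∀ i j, D i j * w i * w j = dist (x i) (x j) ^ 2 * w i * w j
          - β * (w i * w j) + if i = j then β * w i ^ 2 else 0 := by
        intro i j
        by_cases h : i = j <;> simp [D, h] <;> ring
      simp only [hterm, sum_add_distrib, sum_sub_distrib, ← mul_sum, sum_ite_eq, mem_univ,
        if_true, sq (∑ i, w i), sum_mul_sum]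
    have hpos : 0 < ∑ i, w i ^ 2 := by
      obtain ⟨i, hi⟩ := Function.ne_iff.mp hw
      rw [Pi.zero_apply] at hi
      exact sum_pos' (fun i _ => sq_nonneg (w i)) ⟨i, mem_univ i, by positivity⟩
    rw [hD, sum_sum_dist_sq_mul_mul x hsum, hsum]
    nlinarith [hγ w hsum]
  obtain ⟨y, hy, hdist⟩ := exists_affineIndependent_dist_sq_eq (D := D)
    (fun i j => by simp only [D, dist_comm (x i), eq_comm]) (fun i => by simp [D]) hneg
  exact ⟨y, hy, fun i j hij => by rw [hdist]; simp [D, hij]⟩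

/-- Step 1 of the proof that simplices are P-Ramsey: the squared-distance form of a simplex is
uniformly strictly negative on the hyperplane `∑ λᵢ = 0`, and subtracting `β = γ/(8d²)` from
every squared distance still yields a realizable simplex. -/
theorem simplex_shrink_squared_distances
    (d n : ℕ) (x : Fin (d+1) → EuclideanSpace ℝ (Fin n))
    (hx : AffineIndependent ℝ x) :
    ∃ γ : ℝ, 0 < γ ∧
      (∀ lam : Fin (d+1) → ℝ, ∑ i, lam i = 0 → ∑ i, (lam i)^2 = 1 →
        ∑ p ∈ Finset.univ.filter (fun p : Fin (d+1) × Fin (d+1) => p.1 < p.2),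
          (dist (x p.1) (x p.2))^2 * lam p.1 * lam p.2 ≤ -γ) ∧
      ∃ y : Fin (d+1) → EuclideanSpace ℝ (Fin d),
        AffineIndependent ℝ y ∧
        ∀ i j, i ≠ j →
          (dist (y i) (y j))^2 = (dist (x i) (x j))^2 - γ / (8 * (d : ℝ)^2) := by
  obtain ⟨γ, hγ, hbound⟩ := hx.exists_pos_mul_sum_sq_le_norm_sq
  refine ⟨γ, hγ, fun w hsum hsq => ?_, exists_affineIndependent_dist_sq_eq_sub hbound ?_⟩
  · have hpairs := two_mul_sum_filter_lt (fun i j => dist (x i) (x j) ^ 2 * w i * w j)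
      (fun i j => by rw [dist_comm]; ring) (fun i => by simp)
    rw [sum_sum_dist_sq_mul_mul x hsum] at hpairs
    have hγw := hbound w hsum
    rw [hsq] at hγw
    linarith
  · rcases d.eq_zero_or_pos with rfl | hd
    · simpa using hγ
    · have hd' : (1 : ℝ) ≤ (d : ℝ) ^ 2 := one_le_pow₀ (by exact_mod_cast hd)
      rw [div_lt_iff₀ (by positivity)]
      nlinarith
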